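/- Let ψ be a nonnegative non-increasing measurable function on (0,∞), and let 0 < r < ∞, 0 < q < ∞. Then there is a constant c, depending only on r and q, such that (∫₀^∞ ( t^{−r} ∫₀^t ψ(s) ds )^q dt/t)^{1/q} ≤ c (∫₀^∞ ( t^{1−r} ψ(t) )^q dt/t)^{1/q}. -/

import Mathlib

/-!
Cut `(0, t]` into the dyadic pieces `(2⁻ᵏ⁻¹ t, 2⁻ᵏ t]`. Since `ψ` is non-increasing,
`t⁻ʳ ∫₀ᵗ ψ ≤ ∑ₖ 2^{-(k+1)r} g(2⁻ᵏ⁻¹ t)` with `g(u) = u^{1-r} ψ(u)`. The measure `dt / t` is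
invariant under dilations, so the `k`-th term has `L^q(dt/t)`-norm `2^{-(k+1)r} ‖g‖`. For
`p = min q 1` the quantity `‖·‖^p` is countably subadditive on `L^q` (Minkowski for `q ≥ 1`,
subadditivity of `x ↦ x^q` for `q ≤ 1`), and summing the geometric series `∑ₖ 2^{-(k+1)rp}` gives
the constant.
-/

open MeasureTheory ENNReal Set

namespace ENNReal

theorem iSup_rpow {ι : Type*} {q : ℝ} (hq : 0 < q) (f : ι → ℝ≥0∞) :
    (⨆ i, f i) ^ q = ⨆ i, f i ^ q :=
  (orderIsoRpow q hq).map_iSup f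

theorem rpow_sum_le_sum_rpow {ι : Type*} {q : ℝ} (hq0 : 0 < q) (hq1 : q ≤ 1) (s : Finset ι)
    (f : ι → ℝ≥0∞) : (∑ i ∈ s, f i) ^ q ≤ ∑ i ∈ s, f i ^ q := by
  classical
  induction s using Finset.induction_on with
  | empty => simp [hq0]
  | insert i s hi ih =>
    rw [Finset.sum_insert hi, Finset.sum_insert hi]
    exact (rpow_add_le_add_rpow _ _ hq0.le hq1).trans (by gcongr)

theorem rpow_tsum_le_tsum_rpow {q : ℝ} (hq0 : 0 < q) (hq1 : q ≤ 1) (f : ℕ → ℝ≥0∞) :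
    (∑' k, f k) ^ q ≤ ∑' k, f k ^ q := by
  rw [ENNReal.tsum_eq_iSup_nat, iSup_rpow hq0]
  exact iSup_le fun n => (rpow_sum_le_sum_rpow hq0 hq1 _ f).trans (ENNReal.sum_le_tsum _)

end ENNReal

section

variable {α : Type*} [MeasurableSpace α] {μ : Measure α} {q : ℝ}

theorem lintegral_rpow_tsum_le_of_le_one (hq0 : 0 < q) (hq1 : q ≤ 1) {f : ℕ → α → ℝ≥0∞}
    (hf : ∀ k, AEMeasurable (f k) μ) :
    ∫⁻ x, (∑' k, f k x) ^ q ∂μ ≤ ∑' k, ∫⁻ x, f k x ^ q ∂μ :=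
  (lintegral_mono fun _ => ENNReal.rpow_tsum_le_tsum_rpow hq0 hq1 _).trans_eq
    (lintegral_tsum fun k => (hf k).pow_const q)

theorem lintegral_Lp_sum_le {ι : Type*} (hq : 1 ≤ q) (s : Finset ι) {f : ι → α → ℝ≥0∞}
    (hf : ∀ i, AEMeasurable (f i) μ) :
    (∫⁻ x, (∑ i ∈ s, f i x) ^ q ∂μ) ^ (1 / q) ≤ ∑ i ∈ s, (∫⁻ x, f i x ^ q ∂μ) ^ (1 / q) := by
  classical
  induction s using Finset.induction_on with
  | empty => simp [zero_lt_one.trans_le hq]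
  | insert i s hi ih =>
    simp only [Finset.sum_insert hi]
    exact (ENNReal.lintegral_Lp_add_le (hf i)
      (Finset.aemeasurable_fun_sum s fun j _ => hf j) hq).trans (by gcongr)

theorem lintegral_Lp_tsum_le (hq : 1 ≤ q) {f : ℕ → α → ℝ≥0∞} (hf : ∀ k, AEMeasurable (f k) μ) :
    (∫⁻ x, (∑' k, f k x) ^ q ∂μ) ^ (1 / q) ≤ ∑' k, (∫⁻ x, f k x ^ q ∂μ) ^ (1 / q) := by
  have hq0 : 0 < q := zero_lt_one.trans_le hq
  have hmono : Monotone fun n x => (∑ k ∈ Finset.range n, f k x) ^ q := fun m n hmn x =>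
    rpow_le_rpow (Finset.sum_le_sum_of_subset (Finset.range_subset_range.2 hmn)) hq0.le
  simp_rw [ENNReal.tsum_eq_iSup_nat, iSup_rpow hq0]
  rw [lintegral_iSup' (fun n => (Finset.aemeasurable_fun_sum _ fun k _ => hf k).pow_const q)
      (ae_of_all _ fun x m n hmn => hmono hmn x), iSup_rpow (one_div_pos.2 hq0)]
  exact iSup_le fun n => (lintegral_Lp_sum_le hq _ hf).trans (le_iSup_of_le n le_rfl)

theorem lintegral_Lp_rpow_min_tsum_le (hq : 0 < q) {f : ℕ → α → ℝ≥0∞}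
    (hf : ∀ k, AEMeasurable (f k) μ) :
    (∫⁻ x, (∑' k, f k x) ^ q ∂μ) ^ (min q 1 / q) ≤ ∑' k, (∫⁻ x, f k x ^ q ∂μ) ^ (min q 1 / q) := by
  rcases le_total q 1 with hq1 | hq1
  · simpa only [min_eq_left hq1, div_self hq.ne', rpow_one]
      using lintegral_rpow_tsum_le_of_le_one hq hq1 hf
  · simpa only [min_eq_right hq1] using lintegral_Lp_tsum_le hq1 hf

end

theorem setLIntegral_Ioi_comp_mul_left (g : ℝ → ℝ≥0∞) {c : ℝ} (hc : 0 < c) :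
    ∫⁻ t in Ioi 0, g (c * t) = ENNReal.ofReal c⁻¹ * ∫⁻ t in Ioi 0, g t := by
  have he := measurableEmbedding_mulLeft₀ hc.ne'
  have hpre : (c * ·) ⁻¹' Ioi 0 = Ioi (0 : ℝ) := by
    ext t; simp [mul_pos_iff_of_pos_left hc]
  conv_lhs => rw [← hpre]
  rw [← he.lintegral_map, ← he.restrict_map, Real.map_volume_mul_left hc.ne',
    Measure.restrict_smul, lintegral_smul_measure, abs_of_pos (inv_pos.2 hc), smul_eq_mul]

/-- The Haar measure `dt / t` of the multiplicative group `(0, ∞)`. -/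
noncomputable def mulHaarIoi : Measure ℝ :=
  (volume.restrict (Ioi 0)).withDensity fun t => ENNReal.ofReal t⁻¹

theorem lintegral_mulHaarIoi (f : ℝ → ℝ≥0∞) :
    ∫⁻ t, f t ∂mulHaarIoi = ∫⁻ t in Ioi 0, f t * ENNReal.ofReal t⁻¹ := by
  rw [mulHaarIoi, lintegral_withDensity_eq_lintegral_mul_non_measurable _ (by fun_prop)
    (ae_of_all _ fun _ => ofReal_lt_top)]
  simp only [Pi.mul_apply, mul_comm]

theorem ae_mulHaarIoi_pos : ∀ᵐ t ∂mulHaarIoi, 0 < t :=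
  (withDensity_absolutelyContinuous _ _).ae_le (ae_restrict_mem measurableSet_Ioi)

theorem lintegral_comp_mul_left_mulHaarIoi (f : ℝ → ℝ≥0∞) {c : ℝ} (hc : 0 < c) :
    ∫⁻ t, f (c * t) ∂mulHaarIoi = ∫⁻ t, f t ∂mulHaarIoi := by
  have hweight : ∀ t ∈ Ioi (0 : ℝ), f (c * t) * ENNReal.ofReal t⁻¹
      = ENNReal.ofReal c * (f (c * t) * ENNReal.ofReal (c * t)⁻¹) := by
    intro t _
    rw [mul_left_comm, ← ofReal_mul hc.le, mul_inv, ← mul_assoc, mul_inv_cancel₀ hc.ne', one_mul]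
  rw [lintegral_mulHaarIoi, lintegral_mulHaarIoi, setLIntegral_congr_fun measurableSet_Ioi hweight,
    lintegral_const_mul' _ _ ofReal_ne_top,
    setLIntegral_Ioi_comp_mul_left (fun u => f u * ENNReal.ofReal u⁻¹) hc, ← mul_assoc,
    ← ofReal_mul hc.le, mul_inv_cancel₀ hc.ne', ofReal_one, one_mul]

theorem Ioc_zero_subset_iUnion_Ioc_two_inv_pow (t : ℝ) :
    Ioc 0 t ⊆ ⋃ k : ℕ, Ioc ((2 : ℝ)⁻¹ ^ (k + 1) * t) ((2 : ℝ)⁻¹ ^ k * t) := by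
  rintro s ⟨hs, hst⟩
  obtain ⟨n, hn, hn'⟩ := exists_nat_pow_near ((one_le_div hs).2 hst) one_lt_two
  refine mem_iUnion.2 ⟨n, ?_, ?_⟩
  · rw [inv_pow, inv_mul_lt_iff₀ (by positivity)]
    rwa [div_lt_iff₀ hs] at hn'
  · rw [inv_pow, le_inv_mul_iff₀ (by positivity)]
    rwa [le_div_iff₀ hs] at hn

theorem setLIntegral_Ioc_zero_le_tsum_of_antitoneOn {ψ : ℝ → ℝ≥0∞} (hψ : AntitoneOn ψ (Ioi 0))
    {t : ℝ} (ht : 0 < t) :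
    ∫⁻ s in Ioc 0 t, ψ s ≤
      ∑' k : ℕ, ENNReal.ofReal ((2 : ℝ)⁻¹ ^ (k + 1) * t) * ψ ((2 : ℝ)⁻¹ ^ (k + 1) * t) := by
  calc ∫⁻ s in Ioc 0 t, ψ s
      ≤ ∑' k : ℕ, ∫⁻ s in Ioc ((2 : ℝ)⁻¹ ^ (k + 1) * t) ((2 : ℝ)⁻¹ ^ k * t), ψ s :=
        (lintegral_mono_set (Ioc_zero_subset_iUnion_Ioc_two_inv_pow t)).trans
          (lintegral_iUnion_le _ _)
    _ ≤ _ := ENNReal.tsum_le_tsum fun k => by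
      have ha : (0 : ℝ) < 2⁻¹ ^ (k + 1) * t := by positivity
      refine (setLIntegral_mono' (g := fun _ => ψ (2⁻¹ ^ (k + 1) * t)) measurableSet_Ioc
        fun s hs => hψ ha (ha.trans hs.1) hs.1.le).trans_eq ?_
      rw [setLIntegral_const, Real.volume_Ioc, mul_comm]
      ring_nf

theorem Real.rpow_neg_mul_mul_eq (r : ℝ) {a t : ℝ} (ha : 0 < a) (ht : 0 < t) :
    t ^ (-r) * (a * t) = a ^ r * (a * t) ^ (1 - r) := by
  rw [Real.rpow_sub (by positivity), Real.rpow_one, Real.mul_rpow ha.le ht.le, Real.rpow_neg ht.le]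
  field_simp

theorem rpow_neg_mul_setLIntegral_Ioc_le_tsum {ψ : ℝ → ℝ≥0∞} (hψ : AntitoneOn ψ (Ioi 0)) (r : ℝ)
    {t : ℝ} (ht : 0 < t) :
    ENNReal.ofReal (t ^ (-r)) * ∫⁻ s in Ioc 0 t, ψ s ≤
      ∑' k : ℕ, ENNReal.ofReal (((2 : ℝ)⁻¹ ^ (k + 1)) ^ r) *
        (ENNReal.ofReal ((2⁻¹ ^ (k + 1) * t) ^ (1 - r)) * ψ (2⁻¹ ^ (k + 1) * t)) := by
  grw [setLIntegral_Ioc_zero_le_tsum_of_antitoneOn hψ ht, ← ENNReal.tsum_mul_left]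
  refine le_of_eq (tsum_congr fun k => ?_)
  have ha : (0 : ℝ) < 2⁻¹ ^ (k + 1) := by positivity
  rw [← mul_assoc, ← mul_assoc, ← ofReal_mul (by positivity), ← ofReal_mul (by positivity),
    Real.rpow_neg_mul_mul_eq r ha ht]

theorem lintegral_rpow_const_mul_comp_mul_left_mulHaarIoi {q : ℝ} (hq : 0 ≤ q) (g : ℝ → ℝ≥0∞)
    {C : ℝ≥0∞} (hC : C ≠ ⊤) {a : ℝ} (ha : 0 < a) :
    ∫⁻ t, (C * g (a * t)) ^ q ∂mulHaarIoi = C ^ q * ∫⁻ t, g t ^ q ∂mulHaarIoi := by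
  simp_rw [mul_rpow_of_nonneg _ _ hq]
  rw [lintegral_const_mul' _ _ (rpow_ne_top_of_nonneg hq hC),
    lintegral_comp_mul_left_mulHaarIoi (fun u => g u ^ q) ha]

noncomputable def hardyConst (r p : ℝ) : ℝ≥0∞ :=
  ∑' k : ℕ, ENNReal.ofReal (2⁻¹ ^ (r * p)) ^ (k + 1)

theorem hardyConst_pos (r p : ℝ) : 0 < hardyConst r p :=
  (ENNReal.pow_pos (ofReal_pos.2 (by positivity)) 1).trans_le (ENNReal.le_tsum 0)

theorem hardyConst_ne_top {r p : ℝ} (hr : 0 < r) (hp : 0 < p) : hardyConst r p ≠ ⊤ := by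
  have hθ : ENNReal.ofReal (2⁻¹ ^ (r * p)) < 1 :=
    ofReal_lt_one.2 (Real.rpow_lt_one (by norm_num) (by norm_num) (by positivity))
  rw [hardyConst, tsum_geometric_add_one]
  exact mul_ne_top ofReal_ne_top (inv_ne_top.2 (tsub_pos_of_lt hθ).ne')

theorem lintegral_rpow_hardy_mulHaarIoi_le {r q : ℝ} (hq : 0 < q) {ψ : ℝ → ℝ≥0∞}
    (hψ : Measurable ψ) (hanti : AntitoneOn ψ (Ioi 0)) :
    (∫⁻ t, (ENNReal.ofReal (t ^ (-r)) * ∫⁻ s in Ioc 0 t, ψ s) ^ q ∂mulHaarIoi) ^ (min q 1 / q)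
      ≤ hardyConst r (min q 1) *
        (∫⁻ t, (ENNReal.ofReal (t ^ (1 - r)) * ψ t) ^ q ∂mulHaarIoi) ^ (min q 1 / q) := by
  set p := min q 1
  set g : ℝ → ℝ≥0∞ := fun u => ENNReal.ofReal (u ^ (1 - r)) * ψ u
  set F : ℕ → ℝ → ℝ≥0∞ := fun k t =>
    ENNReal.ofReal (((2 : ℝ)⁻¹ ^ (k + 1)) ^ r) * g (2⁻¹ ^ (k + 1) * t)
  have hF : ∀ k, AEMeasurable (F k) mulHaarIoi := fun k => by fun_prop
  have hterm (k : ℕ) : (∫⁻ t, F k t ^ q ∂mulHaarIoi) ^ (p / q)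
      = ENNReal.ofReal (2⁻¹ ^ (r * p)) ^ (k + 1) * (∫⁻ t, g t ^ q ∂mulHaarIoi) ^ (p / q) := by
    rw [lintegral_rpow_const_mul_comp_mul_left_mulHaarIoi hq.le g ofReal_ne_top (by positivity),
      mul_rpow_of_nonneg _ _ (by positivity), ← rpow_mul, mul_div_cancel₀ _ hq.ne',
      ofReal_rpow_of_nonneg (by positivity) (lt_min hq one_pos).le,
      ← Real.rpow_mul (by positivity), ← Real.rpow_pow_comm (by norm_num),
      ofReal_pow (by positivity)]
  have hpt : ∀ᵐ t ∂mulHaarIoi, ENNReal.ofReal (t ^ (-r)) * ∫⁻ s in Ioc 0 t, ψ s ≤ ∑' k, F k t :=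
    ae_mulHaarIoi_pos.mono fun t ht => rpow_neg_mul_setLIntegral_Ioc_le_tsum hanti r ht
  calc _ ≤ (∫⁻ t, (∑' k, F k t) ^ q ∂mulHaarIoi) ^ (p / q) := by
        gcongr ?_ ^ _
        exact lintegral_mono_ae (hpt.mono fun t ht => by gcongr)
    _ ≤ ∑' k, (∫⁻ t, F k t ^ q ∂mulHaarIoi) ^ (p / q) := lintegral_Lp_rpow_min_tsum_le hq hF
    _ = _ := by rw [tsum_congr hterm, ENNReal.tsum_mul_right, hardyConst]

theorem ENNReal.rpow_one_div_le_of_rpow_div_le {p q : ℝ} (hp : 0 < p)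
    {x y c : ℝ≥0∞} (h : x ^ (p / q) ≤ c * y ^ (p / q)) : x ^ (1 / q) ≤ c ^ (1 / p) * y ^ (1 / q) :=
  calc x ^ (1 / q) = (x ^ (p / q)) ^ (1 / p) := by rw [← rpow_mul]; field_simp
    _ ≤ (c * y ^ (p / q)) ^ (1 / p) := by gcongr
    _ = c ^ (1 / p) * y ^ (1 / q) := by
        rw [mul_rpow_of_nonneg _ _ (by positivity), ← rpow_mul]; field_simp

/-- Hardy's inequality for non-increasing functions, valid for all `0 < q < ∞`
(including `0 < q < 1`): there is a constant `c = c(r,q)` such that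
`(∫₀^∞ (t^{−r} ∫₀^t ψ)^q dt/t)^{1/q} ≤ c (∫₀^∞ (t^{1−r} ψ(t))^q dt/t)^{1/q}`. -/
theorem hardy_inequality_monotone (r q : ℝ) (hr : 0 < r) (hq : 0 < q) :
    ∃ c : ℝ, 0 < c ∧ ∀ ψ : ℝ → ENNReal, Measurable ψ →
      (∀ s t, 0 < s → s ≤ t → ψ t ≤ ψ s) →
      (∫⁻ t in Set.Ioi (0:ℝ),
          (ENNReal.ofReal (t ^ (-r)) * ∫⁻ s in Set.Ioc (0:ℝ) t, ψ s) ^ q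
            * ENNReal.ofReal t⁻¹) ^ (1 / q)
        ≤ ENNReal.ofReal c *
          (∫⁻ t in Set.Ioi (0:ℝ),
            (ENNReal.ofReal (t ^ (1 - r)) * ψ t) ^ q * ENNReal.ofReal t⁻¹) ^ (1 / q) := by
  have hp : 0 < min q 1 := lt_min hq one_pos
  have hK : hardyConst r (min q 1) ^ (1 / min q 1) ≠ ⊤ :=
    rpow_ne_top_of_nonneg (by positivity) (hardyConst_ne_top hr hp)
  refine ⟨(hardyConst r (min q 1) ^ (1 / min q 1)).toReal,
    toReal_pos (rpow_pos (hardyConst_pos r _) (hardyConst_ne_top hr hp)).ne' hK,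
    fun ψ hψ hmono => ?_⟩
  rw [ofReal_toReal hK, ← lintegral_mulHaarIoi, ← lintegral_mulHaarIoi]
  exact ENNReal.rpow_one_div_le_of_rpow_div_le hp
    (lintegral_rpow_hardy_mulHaarIoi_le hq hψ fun s hs t _ hst => hmono s t hs hst)
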